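/- Let G be a decomposable family whose junction tree has cliques C_1, ..., C_k, and let Q be a query itemset. The linear program over clique-local distributions {p_C : C a clique} with constraints p_C(X = 1) = fr(X) for all X ∈ G with X ⊆ C, and marginal agreement p_{C1} = p_{C2} on C1 ∩ C2 for each tree edge (C1, C2), where Q is contained in one (augmented) clique R, has the same optimal values for min/max of p_R(Q = 1) as the global linear program over joint distributions p on all attributes with p(X=1) = fr(X) for all X ∈ G. -/
import Mathlib


open scoped Classical

/-- A probability distribution on binary vectors over `Fin K`. -/
def IsDistribution {K : ℕ} (p : (Fin K → Bool) → ℝ) : Prop :=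
  (∀ v, 0 ≤ p v) ∧ ∑ v, p v = 1

/-- Marginal probability of the event "agrees with `v` on the itemset `X`". -/
noncomputable def margAt {K : ℕ} (p : (Fin K → Bool) → ℝ) (X : Finset (Fin K))
    (v : Fin K → Bool) : ℝ :=
  ∑ w : Fin K → Bool, if ∀ i ∈ X, w i = v i then p w else 0

/-- Frequency of an itemset: probability that all its attributes are 1. -/
noncomputable def pAll {K : ℕ} (p : (Fin K → Bool) → ℝ) (X : Finset (Fin K)) : ℝ :=
  margAt p X (fun _ => true)

/-- Empirical entropy of the marginal of `q` on the itemset `X`. -/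
noncomputable def entX {K : ℕ} (q : (Fin K → Bool) → ℝ) (X : Finset (Fin K)) : ℝ :=
  -∑ v : {i // i ∈ X} → Bool,
    (∑ w : Fin K → Bool, if ∀ i : {i // i ∈ X}, w i.1 = v i then q w else 0) *
      Real.log (∑ w : Fin K → Bool, if ∀ i : {i // i ∈ X}, w i.1 = v i then q w else 0)

/-- Entropy of a distribution on the full space. -/
noncomputable def entDist {K : ℕ} (p : (Fin K → Bool) → ℝ) : ℝ :=
  -∑ v : Fin K → Bool, p v * Real.log (p v)

def DownwardClosed {K : ℕ} (𝒢 : Finset (Finset (Fin K))) : Prop :=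
  ∀ X ∈ 𝒢, ∀ Y ⊆ X, Y ∈ 𝒢

def Covers {K : ℕ} (𝒢 : Finset (Finset (Fin K))) : Prop :=
  ∀ a : Fin K, ∃ X ∈ 𝒢, a ∈ X

/-- A junction tree (forest) over the family `𝒢`: an acyclic graph on the members of `𝒢`
whose edges join intersecting cliques, such that cliques sharing an attribute are connected,
and satisfying the running intersection property. -/
def IsJunctionTree {K : ℕ} (𝒢 : Finset (Finset (Fin K)))
    (G : SimpleGraph {C // C ∈ 𝒢}) : Prop :=
  G.IsAcyclic ∧
  (∀ X Y, G.Adj X Y → (X.1 ∩ Y.1).Nonempty) ∧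
  (∀ (X Y : {C // C ∈ 𝒢}) (a : Fin K), a ∈ X.1 → a ∈ Y.1 → G.Reachable X Y) ∧
  (∀ (X Y : {C // C ∈ 𝒢}) (a : Fin K), a ∈ X.1 → a ∈ Y.1 →
    ∀ w : G.Walk X Y, w.IsPath → ∀ Z ∈ w.support, a ∈ Z.1)

def Decomposable {K : ℕ} (𝒢 : Finset (Finset (Fin K))) : Prop :=
  ∃ G : SimpleGraph {C // C ∈ 𝒢}, IsJunctionTree 𝒢 G

noncomputable def sepEnt {K : ℕ} (q : (Fin K → Bool) → ℝ) {𝒢 : Finset (Finset (Fin K))}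
    (e : Sym2 {C // C ∈ 𝒢}) : ℝ :=
  Sym2.lift ⟨fun X Y => entX q (X.1 ∩ Y.1), fun X Y => congrArg (entX q) (Finset.inter_comm _ _)⟩ e

/-- Entropy of a junction tree: sum over cliques minus sum over separators. -/
noncomputable def treeEnt {K : ℕ} (q : (Fin K → Bool) → ℝ) (𝒢 : Finset (Finset (Fin K)))
    (G : SimpleGraph {C // C ∈ 𝒢}) : ℝ :=
  (∑ C : {C // C ∈ 𝒢}, entX q C.1) - ∑ e ∈ G.edgeFinset, sepEnt q e

/-- The junction tree distribution: product of clique marginals over product of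
separator marginals. -/
noncomputable def jtDist {K : ℕ} (q : (Fin K → Bool) → ℝ) (𝒢 : Finset (Finset (Fin K)))
    (G : SimpleGraph {C // C ∈ 𝒢}) (v : Fin K → Bool) : ℝ :=
  (∏ C : {C // C ∈ 𝒢}, margAt q C.1 v) /
    ∏ e ∈ G.edgeFinset,
      Sym2.lift ⟨fun X Y => margAt q (X.1 ∩ Y.1) v,
        fun X Y => congrArg (fun S => margAt q S v) (Finset.inter_comm _ _)⟩ e

/-- A function on full binary vectors that only depends on the attributes in `C`. -/
def DependsOnlyOn {K : ℕ} (p : (Fin K → Bool) → ℝ) (C : Finset (Fin K)) : Prop :=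
  ∀ v w, (∀ i ∈ C, v i = w i) → p v = p w

/-- Empirical distribution of a dataset of `N` transactions. -/
noncomputable def empirical {K N : ℕ} (D : Fin N → (Fin K → Bool)) :
    (Fin K → Bool) → ℝ :=
  fun v => ((Finset.univ.filter (fun t => D t = v)).card : ℝ) / N





namespace QT

variable {K : ℕ}

lemma card_fun_bool : Fintype.card (Fin K → Bool) = 2 ^ K := by
  simp [Fintype.card_fun]

/-- number of `e` agreeing with `x` on `A` -/
lemma card_agree (A : Finset (Fin K)) (x : Fin K → Bool) :
    ((Finset.univ.filter fun e : Fin K → Bool => ∀ i ∈ A, e i = x i)).card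
      = 2 ^ (K - A.card) := by
  rw [← Fintype.card_subtype]
  have e : {e : Fin K → Bool // ∀ i ∈ A, e i = x i} ≃ ({i : Fin K // i ∉ A} → Bool) :=
    { toFun := fun f i => f.1 i.1
      invFun := fun g => ⟨fun i => if h : i ∈ A then x i else g ⟨i, h⟩, by
        intro i hi; simp [hi]⟩
      left_inv := by
        rintro ⟨f, hf⟩
        ext i
        by_cases h : i ∈ A <;> simp [h, hf i]
      right_inv := by
        intro g; ext i
        simp [i.2] }
  rw [Fintype.card_congr e, Fintype.card_fun]
  congr 1
  rw [Fintype.card_subtype_compl]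
  simp [Fintype.card_fin]

lemma sum_ite_agree (A : Finset (Fin K)) (x : Fin K → Bool) (c : ℝ) :
    (∑ e : Fin K → Bool, if ∀ i ∈ A, e i = x i then c else 0)
      = 2 ^ (K - A.card) * c := by
  rw [← Finset.sum_filter, Finset.sum_const, card_agree, nsmul_eq_mul]
  push_cast
  ring

lemma margAt_nonneg {p : (Fin K → Bool) → ℝ} (hp : ∀ v, 0 ≤ p v)
    (A : Finset (Fin K)) (v : Fin K → Bool) : 0 ≤ margAt p A v := by
  apply Finset.sum_nonneg
  intro w _
  split <;> simp [hp w]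

lemma margAt_eq_zero {p : (Fin K → Bool) → ℝ} (hp : ∀ v, 0 ≤ p v)
    {A : Finset (Fin K)} {v : Fin K → Bool} (h : margAt p A v = 0) : p v = 0 := by
  have := (Finset.sum_eq_zero_iff_of_nonneg (by
    intro w _; split <;> simp [hp w])).1 h v (Finset.mem_univ v)
  simpa using this

lemma margAt_congr {p : (Fin K → Bool) → ℝ} (A : Finset (Fin K)) {v v' : Fin K → Bool}
    (h : ∀ i ∈ A, v i = v' i) : margAt p A v = margAt p A v' := by
  unfold margAt
  apply Finset.sum_congr rfl
  intro w _
  have : (∀ i ∈ A, w i = v i) ↔ (∀ i ∈ A, w i = v' i) := by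
    constructor <;> intro hw i hi
    · rw [hw i hi, h i hi]
    · rw [hw i hi, ← h i hi]
  simp only [this]

lemma margAt_mono {p : (Fin K → Bool) → ℝ} (hp : ∀ v, 0 ≤ p v)
    {A B : Finset (Fin K)} (hAB : A ⊆ B) (v : Fin K → Bool) :
    margAt p B v ≤ margAt p A v := by
  apply Finset.sum_le_sum
  intro w _
  by_cases h : ∀ i ∈ B, w i = v i
  · rw [if_pos h, if_pos (fun i hi => h i (hAB hi))]
  · rw [if_neg h]
    split <;> simp [hp w]

lemma margAt_empty (p : (Fin K → Bool) → ℝ) (v : Fin K → Bool) :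
    margAt p ∅ v = ∑ w, p w := by
  unfold margAt; simp

/-- marginal-of-marginal identity -/
lemma margAt_marg {p : (Fin K → Bool) → ℝ} {X A : Finset (Fin K)} (hXA : X ⊆ A)
    (v : Fin K → Bool) :
    (∑ u : Fin K → Bool, if ∀ i ∈ X, u i = v i then margAt p A u else 0)
      = 2 ^ (K - A.card) * margAt p X v := by
  unfold margAt
  have step : ∀ u : Fin K → Bool,
      (if ∀ i ∈ X, u i = v i then (∑ w : Fin K → Bool, if ∀ i ∈ A, w i = u i then p w else 0) else 0)
      = ∑ w : Fin K → Bool, if (∀ i ∈ X, u i = v i) ∧ (∀ i ∈ A, w i = u i) then p w else 0 := by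
    intro u
    split_ifs with h
    · exact Finset.sum_congr rfl fun w _ => (if_congr (and_iff_right h) rfl rfl).symm
    · symm; apply Finset.sum_eq_zero; intro w _; simp [h]
  simp only [step]
  rw [Finset.sum_comm]
  have step2 : ∀ w : Fin K → Bool,
      (∑ u : Fin K → Bool, if (∀ i ∈ X, u i = v i) ∧ (∀ i ∈ A, w i = u i) then p w else 0)
      = if ∀ i ∈ X, w i = v i then 2 ^ (K - A.card) * p w else 0 := by
    intro w
    by_cases hw : ∀ i ∈ X, w i = v i
    · rw [if_pos hw, ← sum_ite_agree A w (p w)]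
      apply Finset.sum_congr rfl
      intro u _
      congr 1
      have : ((∀ i ∈ X, u i = v i) ∧ (∀ i ∈ A, w i = u i)) ↔ (∀ i ∈ A, u i = w i) := by
        constructor
        · rintro ⟨_, h2⟩ i hi; exact (h2 i hi).symm
        · intro h
          refine ⟨fun i hi => ?_, fun i hi => (h i (hi)).symm⟩
          rw [h i (hXA hi), hw i hi]
      simp only [this]
    · rw [if_neg hw]
      apply Finset.sum_eq_zero
      intro u _
      rw [if_neg]
      rintro ⟨h1, h2⟩
      apply hw
      intro i hi
      rw [h2 i (hXA hi), h1 i hi]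
  simp only [step2]
  rw [Finset.mul_sum]
  apply Finset.sum_congr rfl
  intro w _
  split <;> simp

/-- transfer of marginals down -/
lemma margAt_trans {p q : (Fin K → Bool) → ℝ} {X A : Finset (Fin K)} (hXA : X ⊆ A)
    (h : ∀ v, margAt p A v = margAt q A v) (v : Fin K → Bool) :
    margAt p X v = margAt q X v := by
  have h1 := margAt_marg (p := p) hXA v
  have h2 := margAt_marg (p := q) hXA v
  simp only [h] at h1
  rw [h2] at h1
  have hpos : (0:ℝ) < 2 ^ (K - A.card) := by positivity
  exact (mul_left_cancel₀ (ne_of_gt hpos) h1.symm)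

lemma sum_margAt (p : (Fin K → Bool) → ℝ) (C : Finset (Fin K)) :
    ∑ v : Fin K → Bool, margAt p C v = 2 ^ (K - C.card) * ∑ w, p w := by
  unfold margAt
  rw [Finset.sum_comm]
  rw [Finset.mul_sum]
  apply Finset.sum_congr rfl
  intro w _
  rw [← sum_ite_agree C w (p w)]
  exact Finset.sum_congr rfl fun v _ =>
    if_congr ⟨fun h i hi => (h i hi).symm, fun h i hi => (h i hi).symm⟩ rfl rfl

lemma margAt_self {g : (Fin K → Bool) → ℝ} {C : Finset (Fin K)}
    (hg : DependsOnlyOn g C) (v : Fin K → Bool) :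
    margAt g C v = 2 ^ (K - C.card) * g v := by
  unfold margAt
  rw [← sum_ite_agree C v (g v)]
  apply Finset.sum_congr rfl
  intro w _
  split_ifs with h
  · exact hg w v h
  · rfl

end QT

namespace QT

variable {K : ℕ}

/-- merge: coordinates in `E` from `e`, otherwise from `b`. -/
def mrg (E : Finset (Fin K)) (b e : Fin K → Bool) : Fin K → Bool :=
  fun i => if i ∈ E then e i else b i

lemma mrg_mem {E : Finset (Fin K)} {b e : Fin K → Bool} {i : Fin K} (h : i ∈ E) :
    mrg E b e i = e i := if_pos h

lemma mrg_notMem {E : Finset (Fin K)} {b e : Fin K → Bool} {i : Fin K} (h : i ∉ E) :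
    mrg E b e i = b i := if_neg h

lemma sum_mrg (E : Finset (Fin K)) (F : (Fin K → Bool) → ℝ) :
    ∑ b : Fin K → Bool, ∑ e : Fin K → Bool, F (mrg E b e)
      = 2 ^ K * ∑ w : Fin K → Bool, F w := by
  have hinv : Function.Involutive
      (fun x : (Fin K → Bool) × (Fin K → Bool) => (mrg E x.1 x.2, mrg E x.2 x.1)) := by
    rintro ⟨b, e⟩
    simp only [Prod.mk.injEq]
    constructor <;> funext i <;> by_cases h : i ∈ E <;> simp [mrg, h]
  have key := Equiv.sum_comp hinv.toPerm
    (fun x : (Fin K → Bool) × (Fin K → Bool) => F x.1)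
  simp only [Function.Involutive.coe_toPerm] at key
  calc ∑ b : Fin K → Bool, ∑ e : Fin K → Bool, F (mrg E b e)
      = ∑ x : (Fin K → Bool) × (Fin K → Bool), F (mrg E x.1 x.2) := by
        rw [Fintype.sum_prod_type]
    _ = ∑ x : (Fin K → Bool) × (Fin K → Bool), F x.1 := key
    _ = ∑ b : Fin K → Bool, ∑ _e : Fin K → Bool, F b := by rw [Fintype.sum_prod_type]
    _ = 2 ^ K * ∑ w, F w := by
        simp only [Finset.sum_const, Finset.card_univ, card_fun_bool, nsmul_eq_mul]
        rw [Finset.mul_sum]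
        push_cast
        exact Finset.sum_congr rfl fun x _ => by ring

/-- summing a clique marginal over the extensions of the new coordinates gives the
separator marginal -/
lemma sum_margAt_mrg (q : (Fin K → Bool) → ℝ) {L E : Finset (Fin K)} (hEL : E ⊆ L)
    (b : Fin K → Bool) :
    ∑ e : Fin K → Bool, margAt q L (mrg E b e)
      = 2 ^ (K - E.card) * margAt q (L \ E) b := by
  unfold margAt
  rw [Finset.sum_comm]
  have step : ∀ x : Fin K → Bool,
      (∑ e : Fin K → Bool, if ∀ i ∈ L, x i = mrg E b e i then q x else 0)
      = if ∀ i ∈ L \ E, x i = b i then 2 ^ (K - E.card) * q x else 0 := by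
    intro x
    by_cases hx : ∀ i ∈ L \ E, x i = b i
    · rw [if_pos hx, ← sum_ite_agree E x (q x)]
      apply Finset.sum_congr rfl
      intro e _
      refine if_congr ?_ rfl rfl
      constructor
      · intro h i hi
        have := h i (hEL hi)
        rwa [mrg_mem hi, eq_comm] at this
      · intro h i hi
        by_cases hiE : i ∈ E
        · rw [mrg_mem hiE, h i hiE]
        · rw [mrg_notMem hiE]
          exact hx i (Finset.mem_sdiff.2 ⟨hi, hiE⟩)
    · rw [if_neg hx]
      apply Finset.sum_eq_zero
      intro e _
      rw [if_neg]
      intro h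
      apply hx
      intro i hi
      rcases Finset.mem_sdiff.1 hi with ⟨hiL, hiE⟩
      have := h i hiL
      rwa [mrg_notMem hiE] at this
  simp only [step]
  rw [Finset.mul_sum]
  exact Finset.sum_congr rfl fun x _ => by split <;> simp

end QT

namespace QT

variable {K : ℕ}

lemma glue_step (p q : (Fin K → Bool) → ℝ) (U L : Finset (Fin K))
    (hp : IsDistribution p) (hq : IsDistribution q)
    (hpU : DependsOnlyOn p U) (hqL : DependsOnlyOn q L)
    (hmarg : ∀ v, margAt p (L ∩ U) v = margAt q (L ∩ U) v) :
    ∃ p' : (Fin K → Bool) → ℝ, IsDistribution p' ∧ DependsOnlyOn p' (U ∪ L) ∧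
      (∀ v, margAt p' L v = margAt q L v) ∧
      (∀ W, W ⊆ U → ∀ v, margAt p' W v = margAt p W v) := by
  classical
  set S₀ : Finset (Fin K) := L ∩ U with hS₀def
  set E : Finset (Fin K) := L \ U with hEdef
  have hEL : E ⊆ L := Finset.sdiff_subset
  have hS₀L : S₀ ⊆ L := Finset.inter_subset_left
  have hLE : L \ E = S₀ := Finset.sdiff_sdiff_self_left L U
  have hS₀E : ∀ i ∈ S₀, i ∉ E := by
    intro i hi
    simp only [hEdef, Finset.mem_sdiff, not_and, not_not]
    intro _
    exact (Finset.mem_inter.1 hi).2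
  have hUE : ∀ i ∈ U, i ∉ E := by
    intro i hi
    simp only [hEdef, Finset.mem_sdiff, not_and, not_not]
    intro _; exact hi
  have hEcard : E.card ≤ K := by
    have := Finset.card_le_univ E
    simpa using this
  set c : ℝ := 2 ^ E.card with hcdef
  set d : ℝ := 2 ^ (K - E.card) with hddef
  have hcd : c * d = 2 ^ K := by
    rw [hcdef, hddef, ← pow_add, Nat.add_sub_cancel' hEcard]
  have h2K : (0:ℝ) < 2 ^ K := by positivity
  set f : (Fin K → Bool) → ℝ :=
    fun v => if margAt q S₀ v = 0 then 0 else margAt q L v / margAt q S₀ v with hfdef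
  have hf_nonneg : ∀ v, 0 ≤ f v := by
    intro v; rw [hfdef]
    dsimp only
    split
    · exact le_refl 0
    · exact div_nonneg (margAt_nonneg hq.1 _ _) (margAt_nonneg hq.1 _ _)
  have hfdep : DependsOnlyOn f L := by
    intro v w h
    rw [hfdef]
    dsimp only
    rw [margAt_congr (p := q) S₀ (fun i hi => h i (hS₀L hi)),
        margAt_congr (p := q) L h]
  have hp0 : ∀ b, margAt q S₀ b = 0 → p b = 0 := by
    intro b h
    exact margAt_eq_zero hp.1 (by rw [hmarg]; exact h)
  set p' : (Fin K → Bool) → ℝ := fun v => c * (p v * f v) with hp'def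
  have hmrg_dep_p : ∀ b e, p (mrg E b e) = p b := by
    intro b e
    exact hpU _ _ (fun i hi => mrg_notMem (hUE i hi))
  have inner : ∀ b, p b * (∑ e : Fin K → Bool, f (mrg E b e)) = p b * d := by
    intro b
    by_cases h0 : margAt q S₀ b = 0
    · rw [hp0 b h0, zero_mul, zero_mul]
    · have hfm : ∀ e : Fin K → Bool,
          f (mrg E b e) = margAt q L (mrg E b e) / margAt q S₀ b := by
        intro e
        have hs : margAt q S₀ (mrg E b e) = margAt q S₀ b :=
          margAt_congr S₀ (fun i hi => mrg_notMem (hS₀E i hi))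
        rw [hfdef]
        dsimp only
        rw [hs, if_neg h0]
      rw [Finset.sum_congr rfl (fun e _ => hfm e), ← Finset.sum_div,
        sum_margAt_mrg q hEL b, hLE, mul_div_assoc, div_self h0, mul_one, ← hddef]
  -- main computation for sets disjoint from E
  have claim1 : ∀ W : Finset (Fin K), (∀ i ∈ W, i ∉ E) →
      ∀ v, margAt p' W v = margAt p W v := by
    intro W hWE v
    have base := sum_mrg E (fun w => if ∀ i ∈ W, w i = v i then p' w else 0)
    have hRHS : (∑ w : Fin K → Bool, if ∀ i ∈ W, w i = v i then p' w else 0)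
        = margAt p' W v := rfl
    rw [hRHS] at base
    have hpt : ∀ b e : Fin K → Bool,
        (if ∀ i ∈ W, mrg E b e i = v i then p' (mrg E b e) else 0)
        = (if ∀ i ∈ W, b i = v i then c * (p b * f (mrg E b e)) else 0) := by
      intro b e
      have hcond : (∀ i ∈ W, mrg E b e i = v i) ↔ (∀ i ∈ W, b i = v i) := by
        constructor <;> intro h i hi
        · rw [← h i hi, mrg_notMem (hWE i hi)]
        · rw [mrg_notMem (hWE i hi)]; exact h i hi
      rw [if_congr hcond rfl rfl]
      split
      · rw [hp'def]; dsimp only; rw [hmrg_dep_p]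
      · rfl
    have hL : (∑ b : Fin K → Bool, ∑ e : Fin K → Bool,
          if ∀ i ∈ W, mrg E b e i = v i then p' (mrg E b e) else 0)
        = (c * d) * margAt p W v := by
      have step1 : ∀ b : Fin K → Bool,
          (∑ e : Fin K → Bool, if ∀ i ∈ W, mrg E b e i = v i then p' (mrg E b e) else 0)
          = if ∀ i ∈ W, b i = v i then (c * d) * p b else 0 := by
        intro b
        rw [Finset.sum_congr rfl (fun e _ => hpt b e)]
        by_cases hb : ∀ i ∈ W, b i = v i
        · rw [if_pos hb]
          rw [Finset.sum_congr rfl (fun e _ => if_pos hb), ← Finset.mul_sum,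
            ← Finset.mul_sum, inner b]
          ring
        · rw [if_neg hb]
          exact Finset.sum_eq_zero fun e _ => if_neg hb
      rw [Finset.sum_congr rfl (fun b _ => step1 b)]
      unfold margAt
      rw [Finset.mul_sum]
      exact Finset.sum_congr rfl fun b _ => by split <;> simp
    rw [hL, hcd] at base
    exact mul_left_cancel₀ (ne_of_gt h2K) base.symm
  have claimL : ∀ v, margAt p' L v = margAt q L v := by
    intro v
    have base := sum_mrg E (fun w => if ∀ i ∈ L, w i = v i then p' w else 0)
    have hRHS : (∑ w : Fin K → Bool, if ∀ i ∈ L, w i = v i then p' w else 0)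
        = margAt p' L v := rfl
    rw [hRHS] at base
    have hpt : ∀ b e : Fin K → Bool,
        (if ∀ i ∈ L, mrg E b e i = v i then p' (mrg E b e) else 0)
        = (if ∀ i ∈ S₀, b i = v i then p b else 0)
          * (if ∀ i ∈ E, e i = v i then c * f v else 0) := by
      intro b e
      have hcond : (∀ i ∈ L, mrg E b e i = v i)
          ↔ ((∀ i ∈ S₀, b i = v i) ∧ (∀ i ∈ E, e i = v i)) := by
        constructor
        · intro h
          constructor
          · intro i hi
            have := h i (hS₀L hi)
            rwa [mrg_notMem (hS₀E i hi)] at this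
          · intro i hi
            have := h i (hEL hi)
            rwa [mrg_mem hi] at this
        · rintro ⟨h1, h2⟩ i hi
          by_cases hiE : i ∈ E
          · rw [mrg_mem hiE]; exact h2 i hiE
          · rw [mrg_notMem hiE]
            apply h1
            rw [hS₀def]
            refine Finset.mem_inter.2 ⟨hi, ?_⟩
            by_contra hiU
            exact hiE (Finset.mem_sdiff.2 ⟨hi, hiU⟩)
      rw [if_congr hcond rfl rfl]
      by_cases h1 : ∀ i ∈ S₀, b i = v i
      · by_cases h2 : ∀ i ∈ E, e i = v i
        · rw [if_pos ⟨h1, h2⟩, if_pos h1, if_pos h2]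
          have hfv : f (mrg E b e) = f v := by
            apply hfdep
            intro i hi
            by_cases hiE : i ∈ E
            · rw [mrg_mem hiE]; exact h2 i hiE
            · rw [mrg_notMem hiE]
              apply h1
              rw [hS₀def]
              refine Finset.mem_inter.2 ⟨hi, ?_⟩
              by_contra hiU
              exact hiE (Finset.mem_sdiff.2 ⟨hi, hiU⟩)
          rw [hp'def]; dsimp only
          rw [hmrg_dep_p, hfv]
          ring
        · rw [if_neg (fun hh => h2 hh.2), if_neg h2, mul_zero]
      · rw [if_neg (fun hh => h1 hh.1), if_neg h1, zero_mul]
    have hL : (∑ b : Fin K → Bool, ∑ e : Fin K → Bool,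
          if ∀ i ∈ L, mrg E b e i = v i then p' (mrg E b e) else 0)
        = margAt p S₀ v * (d * (c * f v)) := by
      rw [Finset.sum_congr rfl (fun b _ => Finset.sum_congr rfl (fun e _ => hpt b e))]
      have factor : ∀ b : Fin K → Bool,
          (∑ e : Fin K → Bool, (if ∀ i ∈ S₀, b i = v i then p b else 0)
            * (if ∀ i ∈ E, e i = v i then c * f v else 0))
          = (if ∀ i ∈ S₀, b i = v i then p b else 0) * (d * (c * f v)) := by
        intro b
        rw [← Finset.mul_sum, sum_ite_agree E v (c * f v), ← hddef]
      rw [Finset.sum_congr rfl (fun b _ => factor b), ← Finset.sum_mul]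
      rfl
    rw [hL] at base
    have hqL' : margAt p S₀ v * f v = margAt q L v := by
      rw [hmarg]
      by_cases h0 : margAt q S₀ v = 0
      · rw [h0, zero_mul]
        symm
        have hle : margAt q L v ≤ margAt q S₀ v := margAt_mono hq.1 hS₀L v
        have hge : 0 ≤ margAt q L v := margAt_nonneg hq.1 _ _
        rw [h0] at hle
        linarith
      · rw [hfdef]; dsimp only
        rw [if_neg h0, mul_div_cancel₀ _ h0]
    have : 2 ^ K * margAt p' L v = 2 ^ K * margAt q L v := by
      rw [← base, ← hqL', ← hcd]
      ring
    exact mul_left_cancel₀ (ne_of_gt h2K) this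
  refine ⟨p', ⟨⟨?_, ?_⟩, ?_, claimL, ?_⟩⟩
  · intro v
    rw [hp'def]; dsimp only
    have : (0:ℝ) ≤ c := by rw [hcdef]; positivity
    exact mul_nonneg this (mul_nonneg (hp.1 v) (hf_nonneg v))
  · have := claim1 ∅ (by simp) (fun _ => true)
    rw [margAt_empty, margAt_empty] at this
    rw [this, hp.2]
  · intro v w h
    rw [hp'def]; dsimp only
    rw [hpU v w (fun i hi => h i (Finset.mem_union_left _ hi)),
      hfdep v w (fun i hi => h i (Finset.mem_union_right _ hi))]
  · intro W hWU v
    exact claim1 W (fun i hi => hUE i (hWU hi)) v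

end QT

namespace QT

open SimpleGraph

lemma second_vertex {V : Type*} {G : SimpleGraph V} {a b : V} (w : G.Walk a b)
    (hne : a ≠ b) : ∃ (N : V) (h : G.Adj a N) (r : G.Walk N b), w = SimpleGraph.Walk.cons h r := by
  cases w with
  | nil => exact absurd rfl hne
  | cons h r => exact ⟨_, h, r, rfl⟩

lemma start_edge_unique {V : Type*} {G : SimpleGraph V} {Y X Z₁ Z₂ : V}
    (r : G.Walk Y X) (hr : r.IsPath)
    (h1 : s(Z₁, Y) ∈ r.edges) (h2 : s(Z₂, Y) ∈ r.edges) : Z₁ = Z₂ := by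
  cases r with
  | nil => simp at h1
  | cons h rr =>
    rename_i N
    have key : ∀ Z : V, s(Z, Y) ∈ (SimpleGraph.Walk.cons h rr).edges → Z = N := by
      intro Z hZ
      rw [SimpleGraph.Walk.edges_cons] at hZ
      rcases List.mem_cons.1 hZ with heq | hmem
      · rcases Sym2.eq_iff.1 heq with ⟨_, hYN⟩ | ⟨hZN, _⟩
        · exact absurd hYN h.ne
        · exact hZN
      · exfalso
        have hYsup := rr.snd_mem_support_of_mem_edges hmem
        exact ((SimpleGraph.Walk.cons_isPath_iff h rr).1 hr).2 hYsup
    rw [key Z₁ h1, key Z₂ h2]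

lemma exists_leaf {V : Type*} [Fintype V] {G : SimpleGraph V} (hac : G.IsAcyclic)
    (S : Finset V) (hS : S.Nonempty) :
    ∃ L ∈ S, ∀ Z₁ Z₂ : V, Z₁ ∈ S → Z₂ ∈ S → G.Adj L Z₁ → G.Adj L Z₂ → Z₁ = Z₂ := by
  classical
  set T : Set ℕ := {n | ∃ (Y X : V) (r : G.Walk Y X), r.IsPath ∧
    (∀ z ∈ r.support, z ∈ S) ∧ r.length = n} with hTdef
  obtain ⟨L0, hL0⟩ := hS
  have hTne : T.Nonempty := ⟨0, L0, L0, SimpleGraph.Walk.nil, SimpleGraph.Walk.IsPath.nil,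
    by intro z hz; simp only [SimpleGraph.Walk.support_nil, List.mem_singleton] at hz; rw [hz]; exact hL0,
    rfl⟩
  have hTbdd : BddAbove T := by
    refine ⟨Fintype.card V, ?_⟩
    rintro n ⟨Y, X, r, hr, _, hlen⟩
    rw [← hlen]
    exact le_of_lt hr.length_lt
  have hmem := Nat.sSup_mem hTne hTbdd
  obtain ⟨Y, X, r, hr, hrS, hrlen⟩ := hmem
  refine ⟨Y, hrS Y r.start_mem_support, ?_⟩
  have key : ∀ Z, Z ∈ S → G.Adj Y Z → s(Z, Y) ∈ r.edges := by
    intro Z hZS hadj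
    by_cases hZsup : Z ∈ r.support
    · have hq : (r.takeUntil Z hZsup).IsPath := hr.takeUntil _
      have hnc := hac ((r.takeUntil Z hZsup).cons hadj.symm)
      rw [SimpleGraph.Walk.cons_isCycle_iff] at hnc
      push_neg at hnc
      exact (r.edges_takeUntil_subset hZsup) (hnc hq)
    · exfalso
      have hpath : (r.cons hadj.symm).IsPath :=
        (SimpleGraph.Walk.cons_isPath_iff _ _).2 ⟨hr, hZsup⟩
      have hmemT : r.length + 1 ∈ T := by
        refine ⟨Z, X, r.cons hadj.symm, hpath, ?_, by simp⟩
        intro z hz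
        rw [SimpleGraph.Walk.support_cons, List.mem_cons] at hz
        rcases hz with rfl | hz
        · exact hZS
        · exact hrS z hz
      have := le_csSup hTbdd hmemT
      omega
  intro Z₁ Z₂ h1S h2S ha1 ha2
  exact start_edge_unique r hr (key Z₁ h1S ha1) (key Z₂ h2S ha2)

end QT


namespace QT

variable {K : ℕ}

def pathClosed {𝒞 : Finset (Finset (Fin K))} (G : SimpleGraph {C // C ∈ 𝒞})
    (S : Finset {C // C ∈ 𝒞}) : Prop :=
  ∀ X Y : {C // C ∈ 𝒞}, X ∈ S → Y ∈ S → ∀ w : G.Walk X Y, w.IsPath →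
    ∀ Z ∈ w.support, Z ∈ S

lemma build {𝒞 : Finset (Finset (Fin K))} {G : SimpleGraph {C // C ∈ 𝒞}}
    (hG : IsJunctionTree 𝒞 G) (pfam : {C // C ∈ 𝒞} → (Fin K → Bool) → ℝ)
    (hfam : ∀ C, IsDistribution (pfam C) ∧ DependsOnlyOn (pfam C) C.1)
    (hcons : ∀ C₁ C₂, G.Adj C₁ C₂ →
      ∀ v, margAt (pfam C₁) (C₁.1 ∩ C₂.1) v = margAt (pfam C₂) (C₁.1 ∩ C₂.1) v) :
    ∀ (n : ℕ) (S : Finset {C // C ∈ 𝒞}), S.card = n → pathClosed G S →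
      ∃ p : (Fin K → Bool) → ℝ, IsDistribution p ∧
        DependsOnlyOn p (S.sup (fun C => C.1)) ∧
        (∀ C ∈ S, ∀ v, margAt p C.1 v = margAt (pfam C) C.1 v) := by
  classical
  intro n
  induction n with
  | zero =>
    intro S hcard _
    have hSe : S = ∅ := Finset.card_eq_zero.1 hcard
    refine ⟨fun _ => ((2:ℝ) ^ K)⁻¹, ⟨⟨fun v => by positivity, ?_⟩, ?_, ?_⟩⟩
    · rw [Finset.sum_const, Finset.card_univ, card_fun_bool, nsmul_eq_mul]
      push_cast
      rw [mul_inv_cancel₀]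
      positivity
    · intro v w _; rfl
    · intro C hC; rw [hSe] at hC; exact absurd hC (Finset.notMem_empty C)
  | succ n ih =>
    intro S hcard hSclosed
    have hSne : S.Nonempty := by
      rw [← Finset.card_pos, hcard]; omega
    obtain ⟨L, hLS, hleaf⟩ := exists_leaf hG.1 S hSne
    set S' : Finset {C // C ∈ 𝒞} := S.erase L with hS'def
    have hS'sub : S' ⊆ S := Finset.erase_subset _ _
    have hS'card : S'.card = n := by
      rw [hS'def, Finset.card_erase_of_mem hLS, hcard]
      omega
    have hS'closed : pathClosed G S' := by
      intro X Y hX hY w hw Z hZ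
      have hXS : X ∈ S := hS'sub hX
      have hYS : Y ∈ S := hS'sub hY
      have hZS : Z ∈ S := hSclosed X Y hXS hYS w hw Z hZ
      refine Finset.mem_erase.2 ⟨?_, hZS⟩
      rintro rfl
      -- Z = L is interior: two distinct S-neighbors, contradiction with hleaf
      have hZX : Z ≠ X := fun h => (Finset.mem_erase.1 hX).1 (by rw [← h])
      have hZY : Z ≠ Y := fun h => (Finset.mem_erase.1 hY).1 (by rw [← h])
      obtain ⟨N₂, hN₂adj, r₂, hr₂⟩ := second_vertex (w.dropUntil Z hZ) hZY
      obtain ⟨N₁, hN₁adj, r₁, hr₁⟩ := second_vertex (w.takeUntil Z hZ).reverse hZX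
      have hN₁q : N₁ ∈ (w.takeUntil Z hZ).support := by
        have h1 : N₁ ∈ (w.takeUntil Z hZ).reverse.support := by
          rw [hr₁, SimpleGraph.Walk.support_cons]
          exact List.mem_cons_of_mem _ r₁.start_mem_support
        rwa [SimpleGraph.Walk.support_reverse, List.mem_reverse] at h1
      have hN₂r : N₂ ∈ (w.dropUntil Z hZ).support.tail := by
        rw [hr₂]
        simp only [SimpleGraph.Walk.support_cons, List.tail_cons]
        exact r₂.start_mem_support
      have hN₁S : N₁ ∈ S :=
        hSclosed X Y hXS hYS w hw N₁ ((SimpleGraph.Walk.support_takeUntil_subset w hZ) hN₁q)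
      have hN₂S : N₂ ∈ S := by
        apply hSclosed X Y hXS hYS w hw N₂
        apply SimpleGraph.Walk.support_dropUntil_subset w hZ
        rw [hr₂]
        simp only [SimpleGraph.Walk.support_cons, List.mem_cons]
        right
        exact r₂.start_mem_support
      have heq : N₁ = N₂ := hleaf N₁ N₂ hN₁S hN₂S hN₁adj hN₂adj
      -- but supports are disjoint
      have h2 : (((w.takeUntil Z hZ).append (w.dropUntil Z hZ)).support).Nodup := by
        rw [SimpleGraph.Walk.take_spec w hZ]
        exact hw.support_nodup
      rw [SimpleGraph.Walk.support_append] at h2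
      have hdisj := List.disjoint_of_nodup_append h2
      exact hdisj hN₁q (heq ▸ hN₂r)
    obtain ⟨p, hp, hpU, hpmarg⟩ := ih S' hS'card hS'closed
    set U : Finset (Fin K) := S'.sup (fun C => C.1) with hUdef
    -- separator marginal agreement
    have hmargS₀ : ∀ v, margAt p (L.1 ∩ U) v = margAt (pfam L) (L.1 ∩ U) v := by
      by_cases hLU : L.1 ∩ U = ∅
      · intro v
        rw [hLU, margAt_empty, margAt_empty, hp.2, (hfam L).1.2]
      · -- find the unique neighbour D
        have step : ∀ a, a ∈ L.1 ∩ U → ∃ N, N ∈ S' ∧ G.Adj L N ∧ a ∈ N.1 := by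
          intro a ha
          obtain ⟨haL, haU⟩ := Finset.mem_inter.1 ha
          obtain ⟨C, hCS', haC⟩ := Finset.mem_sup.1 haU
          have hCL : C ≠ L := (Finset.mem_erase.1 hCS').1
          have hreach : G.Reachable L C := hG.2.2.1 L C a haL haC
          obtain ⟨w0⟩ := hreach
          set w := w0.toPath.1 with hwdef
          have hw : w.IsPath := w0.toPath.2
          obtain ⟨N, hadj, rr, hrr⟩ := second_vertex w (fun h => hCL h.symm)
          have hNsup : N ∈ w.support := by
            rw [hrr, SimpleGraph.Walk.support_cons]
            exact List.mem_cons_of_mem _ rr.start_mem_support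
          have hNS : N ∈ S := hSclosed L C hLS (hS'sub hCS') w hw N hNsup
          have hNL : N ≠ L := hadj.ne'
          refine ⟨N, Finset.mem_erase.2 ⟨hNL, hNS⟩, hadj, ?_⟩
          exact hG.2.2.2 L C a haL haC w hw N hNsup
        obtain ⟨a₀, ha₀⟩ := Finset.nonempty_iff_ne_empty.2 hLU
        obtain ⟨D, hDS', hDadj, _⟩ := step a₀ ha₀
        have hsub : L.1 ∩ U ⊆ L.1 ∩ D.1 := by
          intro a ha
          obtain ⟨N, hNS', hNadj, haN⟩ := step a ha
          have : N = D := hleaf N D (hS'sub hNS') (hS'sub hDS') hNadj hDadj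
          exact Finset.mem_inter.2 ⟨(Finset.mem_inter.1 ha).1, this ▸ haN⟩
        have hsub' : L.1 ∩ D.1 ⊆ L.1 ∩ U := by
          intro a ha
          refine Finset.mem_inter.2 ⟨(Finset.mem_inter.1 ha).1, ?_⟩
          have hD : D.1 ≤ U := Finset.le_sup hDS'
          exact hD (Finset.mem_inter.1 ha).2
        have hLUeq : L.1 ∩ U = L.1 ∩ D.1 := Finset.Subset.antisymm hsub hsub'
        intro v
        rw [hLUeq]
        have h1 : margAt p (L.1 ∩ D.1) v = margAt (pfam D) (L.1 ∩ D.1) v :=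
          margAt_trans (Finset.inter_subset_right) (hpmarg D hDS') v
        rw [h1]
        have h2 := hcons L D hDadj v
        exact h2.symm
    obtain ⟨p', hp'dist, hp'dep, hp'L, hp'W⟩ :=
      glue_step p (pfam L) U L.1 hp (hfam L).1 hpU (hfam L).2 hmargS₀
    refine ⟨p', hp'dist, ?_, ?_⟩
    · have hSins : S = insert L S' := (Finset.insert_erase hLS).symm
      rw [hSins, Finset.sup_insert]
      have : L.1 ⊔ U = U ∪ L.1 := by
        rw [Finset.sup_eq_union, Finset.union_comm]
      rw [← hUdef] at *
      rw [this] at *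
      exact hp'dep
    · intro C hCS v
      by_cases hCL : C = L
      · rw [hCL]; exact hp'L v
      · have hCS' : C ∈ S' := Finset.mem_erase.2 ⟨hCL, hCS⟩
        rw [hp'W C.1 (Finset.le_sup hCS') v]
        exact hpmarg C hCS' v

end QT



/-- The clique-local linear program over a junction tree (local frequency
constraints plus marginal agreement on separators, with the query contained in the
augmented root clique `R`) has the same achievable values for `p_R(Q = 1)` as the global
program over joint distributions. -/
theorem querytree_lp {K : ℕ} (fr : Finset (Fin K) → ℝ)
    (𝒢 𝒞 : Finset (Finset (Fin K)))
    (G : SimpleGraph {C // C ∈ 𝒞}) (hG : IsJunctionTree 𝒞 G)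
    (hcov : ∀ X ∈ 𝒢, ∃ C ∈ 𝒞, X ⊆ C)
    (Q : Finset (Fin K)) (R : {C // C ∈ 𝒞}) (hQR : Q ⊆ R.1) :
    {r : ℝ | ∃ pfam : {C // C ∈ 𝒞} → (Fin K → Bool) → ℝ,
        (∀ C, IsDistribution (pfam C) ∧ DependsOnlyOn (pfam C) C.1) ∧
        (∀ C : {C // C ∈ 𝒞}, ∀ X ∈ 𝒢, X ⊆ C.1 → pAll (pfam C) X = fr X) ∧
        (∀ C₁ C₂, G.Adj C₁ C₂ →
          ∀ v, margAt (pfam C₁) (C₁.1 ∩ C₂.1) v = margAt (pfam C₂) (C₁.1 ∩ C₂.1) v) ∧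
        pAll (pfam R) Q = r} =
    {r : ℝ | ∃ p : (Fin K → Bool) → ℝ, IsDistribution p ∧
        (∀ X ∈ 𝒢, pAll p X = fr X) ∧ pAll p Q = r} := by
  classical
  ext r
  simp only [Set.mem_setOf_eq]
  constructor
  · rintro ⟨pfam, hfam, hfr, hadj, hQ⟩
    obtain ⟨p, hp, _, hmargs⟩ := QT.build hG pfam hfam hadj Finset.univ.card Finset.univ rfl
      (fun X Y _ _ w hw Z hZ => Finset.mem_univ Z)
    refine ⟨p, hp, ?_, ?_⟩
    · intro X hX
      obtain ⟨C, hC𝒞, hXC⟩ := hcov X hX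
      have h := hmargs ⟨C, hC𝒞⟩ (Finset.mem_univ _)
      have := QT.margAt_trans hXC h (fun _ => true)
      unfold pAll
      rw [this]
      exact hfr ⟨C, hC𝒞⟩ X hX hXC
    · have h := hmargs R (Finset.mem_univ _)
      have := QT.margAt_trans hQR h (fun _ => true)
      unfold pAll at hQ ⊢
      rw [this]
      exact hQ
  · rintro ⟨p, hp, hfr, hQ⟩
    set pf : {C // C ∈ 𝒞} → (Fin K → Bool) → ℝ :=
      fun C v => margAt p C.1 v / 2 ^ (K - C.1.card) with hpfdef
    have hpow : ∀ C : {C // C ∈ 𝒞}, (0:ℝ) < 2 ^ (K - C.1.card) := fun C => by positivity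
    have hdep : ∀ C, DependsOnlyOn (pf C) C.1 := by
      intro C v w h
      rw [hpfdef]
      dsimp only
      rw [QT.margAt_congr C.1 h]
    have hdist : ∀ C, IsDistribution (pf C) := by
      intro C
      constructor
      · intro v
        exact div_nonneg (QT.margAt_nonneg hp.1 _ _) (le_of_lt (hpow C))
      · rw [hpfdef]
        dsimp only
        rw [← Finset.sum_div, QT.sum_margAt, hp.2, mul_one]
        exact div_self (ne_of_gt (hpow C))
    have hself : ∀ C v, margAt (pf C) C.1 v = margAt p C.1 v := by
      intro C v
      rw [QT.margAt_self (hdep C)]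
      rw [hpfdef]
      dsimp only
      rw [mul_div_cancel₀]
      exact ne_of_gt (hpow C)
    refine ⟨pf, fun C => ⟨hdist C, hdep C⟩, ?_, ?_, ?_⟩
    · intro C X hX hXC
      unfold pAll
      rw [QT.margAt_trans hXC (hself C) (fun _ => true)]
      exact hfr X hX
    · intro C₁ C₂ _ v
      rw [QT.margAt_trans Finset.inter_subset_left (hself C₁) v,
        QT.margAt_trans Finset.inter_subset_right (hself C₂) v]
    · unfold pAll at hQ ⊢
      rw [QT.margAt_trans hQR (hself R) (fun _ => true)]
      exact hQ
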